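/- arXiv:2304.07573 — 2 statements merged into one kernel-verified Lean document; each statement's English description precedes it below -/
import Mathlib

section
/- Let X_1,...,X_n be discrete random variables and let J be a random subset of [n] independent of (X_1,...,X_n). Then the conditional entropy H(X_J | J) is at most (max over u in [n] of P[u ∈ J]) times the sum over j of H(X_j). -/
open Finset

noncomputable def prEq {Ω : Type*} [Fintype Ω] {α : Type*} [DecidableEq α]
    (μ : Ω → ℝ) (X : Ω → α) (a : α) : ℝ :=
  ∑ ω, if X ω = a then μ ω else 0

open scoped Classical in
noncomputable def prEvent {Ω : Type*} [Fintype Ω] (μ : Ω → ℝ) (s : Ω → Prop) : ℝ :=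
  ∑ ω, if s ω then μ ω else 0

noncomputable def entro {Ω α : Type*} [Fintype Ω] [Fintype α] [DecidableEq α]
    (μ : Ω → ℝ) (X : Ω → α) : ℝ :=
  ∑ a, Real.negMulLog (prEq μ X a)

noncomputable def condEntro {Ω α β : Type*} [Fintype Ω] [Fintype α] [DecidableEq α]
    [Fintype β] [DecidableEq β] (μ : Ω → ℝ) (X : Ω → α) (Y : Ω → β) : ℝ :=
  entro μ (fun ω => (X ω, Y ω)) - entro μ Y

noncomputable def mutInfo {Ω α β : Type*} [Fintype Ω] [Fintype α] [DecidableEq α]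
    [Fintype β] [DecidableEq β] (μ : Ω → ℝ) (X : Ω → α) (Y : Ω → β) : ℝ :=
  entro μ X + entro μ Y - entro μ (fun ω => (X ω, Y ω))

noncomputable def condMutInfo {Ω α β γ : Type*} [Fintype Ω] [Fintype α] [DecidableEq α]
    [Fintype β] [DecidableEq β] [Fintype γ] [DecidableEq γ]
    (μ : Ω → ℝ) (X : Ω → α) (Y : Ω → β) (Z : Ω → γ) : ℝ :=
  condEntro μ X Z + condEntro μ Y Z - condEntro μ (fun ω => (X ω, Y ω)) Z

def IsPMF {Ω : Type*} [Fintype Ω] (μ : Ω → ℝ) : Prop :=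
  (∀ ω, 0 ≤ μ ω) ∧ ∑ ω, μ ω = 1

def IndepRV {Ω α β : Type*} [Fintype Ω] [DecidableEq α] [DecidableEq β]
    (μ : Ω → ℝ) (X : Ω → α) (Y : Ω → β) : Prop :=
  ∀ a b, prEq μ (fun ω => (X ω, Y ω)) (a, b) = prEq μ X a * prEq μ Y b

open Real

section Aux

variable {Ω : Type*} [Fintype Ω] {μ : Ω → ℝ}

lemma prEq_nonneg' {α : Type*} [DecidableEq α] (h : ∀ ω, 0 ≤ μ ω) (X : Ω → α) (a : α) :
    0 ≤ prEq μ X a := by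
  unfold prEq
  exact Finset.sum_nonneg fun ω _ => by by_cases hx : X ω = a <;> simp [hx, h ω]

lemma sum_prEq' {α : Type*} [Fintype α] [DecidableEq α] (X : Ω → α) :
    ∑ a, prEq μ X a = ∑ ω, μ ω := by
  unfold prEq
  rw [Finset.sum_comm]
  exact Finset.sum_congr rfl fun ω _ => by simp

lemma prEq_congr {α : Type*} [DecidableEq α] {X Y : Ω → α} (h : ∀ ω, X ω = Y ω) (a : α) :
    prEq μ X a = prEq μ Y a := by
  unfold prEq
  exact Finset.sum_congr rfl fun ω _ => by rw [h ω]

lemma prEq_comp' {β γ : Type*} [Fintype β] [DecidableEq β] [DecidableEq γ]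
    (W : Ω → β) (f : β → γ) (c : γ) :
    prEq μ (fun ω => f (W ω)) c = ∑ b, if f b = c then prEq μ W b else 0 := by
  unfold prEq
  have h1 : ∀ b : β, (if f b = c then (∑ ω, if W ω = b then μ ω else 0) else 0)
      = ∑ ω, if f b = c then (if W ω = b then μ ω else 0) else 0 := by
    intro b; split <;> simp
  simp_rw [h1]
  rw [Finset.sum_comm]
  refine Finset.sum_congr rfl fun ω _ => ?_
  have h2 : ∀ b : β, (if f b = c then (if W ω = b then μ ω else 0) else 0)
      = if W ω = b then (if f b = c then μ ω else 0) else 0 := by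
    intro b; by_cases hb1 : f b = c <;> by_cases hb2 : W ω = b <;> simp [hb1, hb2]
  simp_rw [h2]
  rw [Finset.sum_ite_eq univ (W ω) (fun b => if f b = c then μ ω else 0)]
  simp

lemma prEq_le_one' {α : Type*} [Fintype α] [DecidableEq α] (h0 : ∀ ω, 0 ≤ μ ω)
    (h1 : ∑ ω, μ ω = 1) (X : Ω → α) (a : α) : prEq μ X a ≤ 1 := by
  have := Finset.single_le_sum (f := fun a => prEq μ X a)
    (fun b _ => prEq_nonneg' h0 X b) (Finset.mem_univ a)
  rw [sum_prEq', h1] at this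
  exact this

lemma entro_nonneg' {α : Type*} [Fintype α] [DecidableEq α] (h0 : ∀ ω, 0 ≤ μ ω)
    (h1 : ∑ ω, μ ω = 1) (X : Ω → α) : 0 ≤ entro μ X := by
  unfold entro
  exact Finset.sum_nonneg fun a _ =>
    Real.negMulLog_nonneg (prEq_nonneg' h0 X a) (prEq_le_one' h0 h1 X a)

lemma gibbs {ι : Type*} [Fintype ι] (p q : ι → ℝ) (hp : ∀ i, 0 ≤ p i) (hq : ∀ i, 0 ≤ q i)
    (habs : ∀ i, p i ≠ 0 → q i ≠ 0) (hps : ∑ i, p i = 1) (hqs : ∑ i, q i ≤ 1) :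
    ∑ i, negMulLog (p i) ≤ ∑ i, -(p i * Real.log (q i)) := by
  have key : ∀ i, negMulLog (p i) + p i * Real.log (q i) ≤ q i - p i := by
    intro i
    rcases eq_or_lt_of_le (hp i) with h0 | h0
    · simp [← h0, negMulLog, hq i]
    · have hq0 : 0 < q i := lt_of_le_of_ne (hq i) (Ne.symm (habs i (ne_of_gt h0)))
      have hlog : Real.log (q i / p i) ≤ q i / p i - 1 :=
        Real.log_le_sub_one_of_pos (div_pos hq0 h0)
      rw [Real.log_div (ne_of_gt hq0) (ne_of_gt h0)] at hlog
      have hm := mul_le_mul_of_nonneg_left hlog (le_of_lt h0)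
      have h2 : p i * (q i / p i - 1) = q i - p i := by field_simp
      rw [h2] at hm
      simp only [negMulLog]
      nlinarith
  have hsum : ∑ i, (negMulLog (p i) + p i * Real.log (q i)) ≤ ∑ i, (q i - p i) :=
    Finset.sum_le_sum fun i _ => key i
  rw [Finset.sum_sub_distrib, hps, Finset.sum_add_distrib] at hsum
  have h3 : ∑ i, -(p i * Real.log (q i)) = -∑ i, p i * Real.log (q i) := by simp
  linarith

end Aux

/-- auxiliary: embed a tuple indexed by a subset as an option-valued tuple. -/
def fSmap {n : ℕ} {α : Type*} (S : Finset (Fin n)) (g : Fin n → α) : Fin n → Option α :=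
  fun j => if j ∈ S then some (g j) else none

/-- auxiliary: support of an option-valued tuple. -/
def suppOf {n : ℕ} {α : Type*} (y : Fin n → Option α) : Finset (Fin n) :=
  univ.filter (fun j => (y j).isSome)

/-- subset-entropy lemma: for a random subset `J` of `[n]` independent of the
discrete random variables `X_1, ..., X_n`, the conditional entropy `H(X_J | J)` is at most
`(max_u P[u ∈ J]) * ∑_j H(X_j)`. Here `X_J` is encoded as the tuple that reveals `X_j ω`
exactly for the coordinates `j ∈ J ω`. -/
theorem stmt0 {Ω : Type*} [Fintype Ω] {n : ℕ} {α : Type*} [Fintype α] [DecidableEq α]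
    (μ : Ω → ℝ) (hμ : IsPMF μ) (hn : 0 < n)
    (X : Fin n → Ω → α) (J : Ω → Finset (Fin n))
    (hindep : IndepRV μ J (fun ω => fun j => X j ω)) :
    condEntro μ (fun ω => fun j : Fin n => if j ∈ J ω then some (X j ω) else none) J
      ≤ (Finset.univ.sup' ⟨⟨0, hn⟩, Finset.mem_univ _⟩
          fun u => prEvent μ (fun ω => u ∈ J ω)) * ∑ j, entro μ (X j) := by
  obtain ⟨hμ0, hμ1⟩ := hμ
  have hΩ : Nonempty Ω := by
    by_contra h
    rw [not_nonempty_iff] at h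
    haveI := h
    rw [Finset.univ_eq_empty, Finset.sum_empty] at hμ1
    exact one_ne_zero hμ1.symm
  obtain ⟨ω₀⟩ := hΩ
  set d : α := X ⟨0, hn⟩ ω₀ with hd
  set Y : Ω → (Fin n → Option α) :=
    fun ω => fun j : Fin n => if j ∈ J ω then some (X j ω) else none with hYdef
  set Z : Finset (Fin n) → Ω → (Fin n → Option α) :=
    fun S ω => fSmap S (fun j => X j ω) with hZdef
  have hYZ : ∀ ω, Y ω = Z (J ω) ω := fun ω => rfl
  have hsuppZ : ∀ S ω, suppOf (Z S ω) = S := by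
    intro S ω
    ext j
    simp only [suppOf, fSmap, Finset.mem_filter, Finset.mem_univ, true_and, hZdef]
    by_cases h : j ∈ S <;> simp [h]
  have hJY : ∀ ω, J ω = suppOf (Y ω) := fun ω => (hsuppZ (J ω) ω).symm
  -- total mass of Z S
  have hZtot : ∀ S : Finset (Fin n), ∑ y, prEq μ (Z S) y = 1 := by
    intro S; rw [sum_prEq', hμ1]
  -- prEq (Z S) vanishes off support-S tuples
  have hZzero : ∀ (S : Finset (Fin n)) (y : Fin n → Option α),
      suppOf y ≠ S → prEq μ (Z S) y = 0 := by
    intro S y hne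
    unfold prEq
    refine Finset.sum_eq_zero fun ω _ => ?_
    rw [if_neg]
    intro h
    exact hne (h ▸ hsuppZ S ω)
  have hZne : ∀ (S : Finset (Fin n)) (y : Fin n → Option α),
      prEq μ (Z S) y ≠ 0 → suppOf y = S := by
    intro S y h
    by_contra hc
    exact h (hZzero S y hc)
  -- Step (1): entropy of the pair (Y, J) equals entropy of Y
  have h1 : entro μ (fun ω => (Y ω, J ω)) = entro μ Y := by
    unfold entro
    rw [Fintype.sum_prod_type]
    refine Finset.sum_congr rfl fun y _ => ?_
    have hy : ∀ S : Finset (Fin n), prEq μ (fun ω => (Y ω, J ω)) (y, S)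
        = if S = suppOf y then prEq μ Y y else 0 := by
      intro S
      by_cases hS : S = suppOf y
      · subst hS
        rw [if_pos rfl]
        unfold prEq
        refine Finset.sum_congr rfl fun ω _ => ?_
        refine if_congr ?_ rfl rfl
        constructor
        · intro h
          exact congrArg Prod.fst h
        · intro h
          have hJ : J ω = suppOf y := by rw [hJY ω, h]
          exact Prod.ext h hJ
      · rw [if_neg hS]
        unfold prEq
        refine Finset.sum_eq_zero fun ω _ => ?_
        rw [if_neg]
        intro h
        have h1 : Y ω = y := congrArg Prod.fst h
        have h2 : J ω = S := congrArg Prod.snd h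
        exact hS (by rw [← h2, hJY ω, h1])
    simp_rw [hy]
    simp [apply_ite Real.negMulLog, Real.negMulLog_zero, Finset.sum_ite_eq']
  -- Step (2): factorization of prEq μ Y
  have h2 : ∀ y : Fin n → Option α,
      prEq μ Y y = prEq μ J (suppOf y) * prEq μ (Z (suppOf y)) y := by
    intro y
    have step1 : prEq μ Y y = prEq μ (fun ω => (J ω, Z (suppOf y) ω)) (suppOf y, y) := by
      unfold prEq
      refine Finset.sum_congr rfl fun ω _ => ?_
      refine if_congr ?_ rfl rfl
      constructor
      · intro h
        have hJ : J ω = suppOf y := by rw [hJY ω, h]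
        refine Prod.ext hJ ?_
        show Z (suppOf y) ω = y
        rw [← hJ, ← hYZ ω, h]
      · intro h
        have hp1 : J ω = suppOf y := congrArg Prod.fst h
        have hp2 : Z (suppOf y) ω = y := congrArg Prod.snd h
        rw [hYZ ω, hp1, hp2]
    have hindep' : ∀ (T : Finset (Fin n)) (g : Fin n → α),
        prEq μ (fun ω => (J ω, fun j => X j ω)) (T, g)
          = prEq μ J T * prEq μ (fun ω => fun j => X j ω) g := hindep
    have step2 : prEq μ (fun ω => (J ω, Z (suppOf y) ω)) (suppOf y, y)
        = prEq μ J (suppOf y) * prEq μ (Z (suppOf y)) y := by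
      have hc : prEq μ (fun ω => (J ω, Z (suppOf y) ω)) (suppOf y, y)
          = ∑ b : Finset (Fin n) × (Fin n → α),
              if (b.1, fSmap (suppOf y) b.2) = (suppOf y, y)
              then prEq μ (fun ω => (J ω, fun j => X j ω)) b else 0 :=
        prEq_comp' (μ := μ) (fun ω => (J ω, fun j => X j ω))
          (fun b => (b.1, fSmap (suppOf y) b.2)) (suppOf y, y)
      rw [hc]
      rw [Fintype.sum_prod_type]
      have hterm : ∀ (T : Finset (Fin n)) (g : Fin n → α),
          (if ((T, g).1, fSmap (suppOf y) (T, g).2) = (suppOf y, y)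
            then prEq μ (fun ω => (J ω, fun j => X j ω)) (T, g) else 0)
          = if T = suppOf y then (if fSmap (suppOf y) g = y
              then prEq μ J (suppOf y) * prEq μ (fun ω => fun j => X j ω) g else 0) else 0 := by
        intro T g
        by_cases hT : T = suppOf y <;> by_cases hg : fSmap (suppOf y) g = y <;>
          simp [hT, hg, Prod.ext_iff, hindep']
      simp_rw [hterm]
      rw [Finset.sum_comm]
      simp only [Finset.sum_ite_eq', Finset.mem_univ, if_true]
      have hzy : prEq μ (Z (suppOf y)) y
          = ∑ g, if fSmap (suppOf y) g = y then prEq μ (fun ω => fun j => X j ω) g else 0 :=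
        prEq_comp' (μ := μ) (fun ω => fun j => X j ω) (fSmap (suppOf y)) y
      rw [hzy, Finset.mul_sum]
      refine Finset.sum_congr rfl fun g _ => ?_
      split <;> simp
    rw [step1, step2]
  -- Step (5): decomposition of the entropy of Y
  have h5 : entro μ Y = entro μ J + ∑ S, prEq μ J S * entro μ (Z S) := by
    unfold entro
    calc ∑ y, negMulLog (prEq μ Y y)
        = ∑ y, (prEq μ (Z (suppOf y)) y * negMulLog (prEq μ J (suppOf y))
            + prEq μ J (suppOf y) * negMulLog (prEq μ (Z (suppOf y)) y)) := by
          refine Finset.sum_congr rfl fun y _ => ?_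
          rw [h2 y, Real.negMulLog_mul]
      _ = (∑ y, prEq μ (Z (suppOf y)) y * negMulLog (prEq μ J (suppOf y)))
            + ∑ y, prEq μ J (suppOf y) * negMulLog (prEq μ (Z (suppOf y)) y) :=
          Finset.sum_add_distrib
      _ = (∑ a, negMulLog (prEq μ J a)) + ∑ S, prEq μ J S * ∑ y, negMulLog (prEq μ (Z S) y) := by
          congr 1
          · rw [← Finset.sum_fiberwise_of_maps_to (g := suppOf)
              (fun y (_ : y ∈ (univ : Finset (Fin n → Option α))) => Finset.mem_univ (suppOf y))
              (fun y => prEq μ (Z (suppOf y)) y * negMulLog (prEq μ J (suppOf y)))]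
            refine Finset.sum_congr rfl fun S _ => ?_
            have hfe : ∀ y ∈ univ.filter (fun y => suppOf y = S),
                prEq μ (Z (suppOf y)) y * negMulLog (prEq μ J (suppOf y))
                  = prEq μ (Z S) y * negMulLog (prEq μ J S) := by
              intro y hy
              rw [(Finset.mem_filter.mp hy).2]
            rw [Finset.sum_congr rfl hfe]
            rw [Finset.sum_filter_of_ne (by
              intro y _ hne
              by_contra hc
              exact hne (by rw [hZzero S y hc, zero_mul]))]
            rw [← Finset.sum_mul, hZtot S, one_mul]
          · rw [← Finset.sum_fiberwise_of_maps_to (g := suppOf)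
              (fun y (_ : y ∈ (univ : Finset (Fin n → Option α))) => Finset.mem_univ (suppOf y))
              (fun y => prEq μ J (suppOf y) * negMulLog (prEq μ (Z (suppOf y)) y))]
            refine Finset.sum_congr rfl fun S _ => ?_
            have hfe : ∀ y ∈ univ.filter (fun y => suppOf y = S),
                prEq μ J (suppOf y) * negMulLog (prEq μ (Z (suppOf y)) y)
                  = prEq μ J S * negMulLog (prEq μ (Z S) y) := by
              intro y hy
              rw [(Finset.mem_filter.mp hy).2]
            rw [Finset.sum_congr rfl hfe]
            rw [Finset.sum_filter_of_ne (by
              intro y _ hne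
              by_contra hc
              rw [hZzero S y hc, Real.negMulLog_zero, mul_zero] at hne
              exact hne rfl)]
            rw [← Finset.mul_sum]
  -- Step (7): subadditivity of entropy for Z S via Gibbs' inequality
  have h7 : ∀ S : Finset (Fin n), entro μ (Z S) ≤ ∑ j ∈ S, entro μ (X j) := by
    intro S
    set p : (Fin n → Option α) → ℝ := fun y => prEq μ (Z S) y with hpdef
    set w : Fin n → Option α → ℝ := fun j o =>
      Option.casesOn o (if j ∈ S then 0 else 1)
        (fun a => if j ∈ S then prEq μ (X j) a else 0) with hwdef
    have hw0 : ∀ j o, 0 ≤ w j o := by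
      intro j o
      cases o with
      | none => by_cases h : j ∈ S <;> simp [hwdef, h]
      | some a => by_cases h : j ∈ S <;> simp [hwdef, h, prEq_nonneg' hμ0]
    have hp0 : ∀ y, 0 ≤ p y := fun y => prEq_nonneg' hμ0 _ y
    have hq0 : ∀ y : Fin n → Option α, 0 ≤ ∏ j, w j (y j) :=
      fun y => Finset.prod_nonneg fun j _ => hw0 j (y j)
    have hpsum : ∑ y, p y = 1 := hZtot S
    have hwsum : ∀ j : Fin n, ∑ o : Option α, w j o = 1 := by
      intro j
      rw [Fintype.sum_option (w j)]
      by_cases h : j ∈ S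
      · have e1 : w j none = 0 := by simp [hwdef, h]
        have e2 : ∀ a, w j (some a) = prEq μ (X j) a := fun a => by simp [hwdef, h]
        rw [e1, zero_add, Finset.sum_congr rfl (fun a _ => e2 a), sum_prEq', hμ1]
      · have e1 : w j none = 1 := by simp [hwdef, h]
        have e2 : ∀ a, w j (some a) = 0 := fun a => by simp [hwdef, h]
        rw [e1, Finset.sum_congr rfl (fun a _ => e2 a), Finset.sum_const_zero, add_zero]
    have hqsum : ∑ y : Fin n → Option α, ∏ j, w j (y j) = 1 := by
      rw [← Fintype.piFinset_univ, Finset.sum_prod_piFinset]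
      rw [Finset.prod_congr rfl (fun j _ => hwsum j)]
      exact Finset.prod_const_one
    have hyS : ∀ y : Fin n → Option α, p y ≠ 0 → suppOf y = S := fun y => hZne S y
    have hynone : ∀ y : Fin n → Option α, suppOf y = S → ∀ j, j ∉ S → y j = none := by
      intro y hy j hj
      rw [← hy] at hj
      simpa [suppOf, Option.not_isSome_iff_eq_none] using hj
    have hysome : ∀ y : Fin n → Option α, suppOf y = S → ∀ j, j ∈ S →
        y j = some ((y j).getD d) := by
      intro y hy j hj
      rw [← hy] at hj
      simp only [suppOf, Finset.mem_filter] at hj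
      obtain ⟨a, ha⟩ := Option.isSome_iff_exists.mp hj.2
      rw [ha]; rfl
    have hmarg : ∀ (j : Fin n), j ∈ S → ∀ a : α,
        prEq μ (X j) a = ∑ y, if (y j).getD d = a then p y else 0 := by
      intro j hj a
      have hptw : ∀ ω, X j ω = ((Z S ω) j).getD d := by
        intro ω
        simp [hZdef, fSmap, hj]
      rw [prEq_congr hptw a]
      exact prEq_comp' (μ := μ) (Z S) (fun y => (y j).getD d) a
    have hple : ∀ y : Fin n → Option α, ∀ j ∈ S, p y ≤ prEq μ (X j) ((y j).getD d) := by
      intro y j hj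
      rw [hmarg j hj]
      have := Finset.single_le_sum
        (f := fun y' : Fin n → Option α => if (y' j).getD d = (y j).getD d then p y' else 0)
        (fun y' _ => by by_cases h : (y' j).getD d = (y j).getD d <;> simp [h, hp0 y'])
        (Finset.mem_univ y)
      simpa using this
    have hwy : ∀ y : Fin n → Option α, p y ≠ 0 → ∀ j, w j (y j) ≠ 0 := by
      intro y hy j
      have hsy := hyS y hy
      by_cases hj : j ∈ S
      · rw [hysome y hsy j hj]
        have hgt : 0 < prEq μ (X j) ((y j).getD d) :=
          lt_of_lt_of_le (lt_of_le_of_ne (hp0 y) (Ne.symm hy)) (hple y j hj)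
        simp [hwdef, hj]
        exact ne_of_gt hgt
      · rw [hynone y hsy j hj]
        simp [hwdef, hj]
    have habs : ∀ y : Fin n → Option α, p y ≠ 0 → (∏ j, w j (y j)) ≠ 0 :=
      fun y hy => Finset.prod_ne_zero_iff.mpr fun j _ => hwy y hy j
    have hgibbs : ∑ y, negMulLog (p y) ≤ ∑ y, -(p y * Real.log (∏ j, w j (y j))) :=
      gibbs p (fun y => ∏ j, w j (y j)) hp0 hq0 habs hpsum (le_of_eq hqsum)
    have hlog : ∀ y : Fin n → Option α, -(p y * Real.log (∏ j, w j (y j)))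
        = ∑ j, -(p y * Real.log (w j (y j))) := by
      intro y
      by_cases hy : p y = 0
      · simp [hy]
      · rw [Real.log_prod (s := univ) (f := fun j => w j (y j)) (fun j _ => hwy y hy j), Finset.mul_sum]
        simp
    have hinner : ∀ j : Fin n, ∑ y, -(p y * Real.log (w j (y j)))
        = if j ∈ S then entro μ (X j) else 0 := by
      intro j
      by_cases hj : j ∈ S
      · rw [if_pos hj]
        have hterm : ∀ y : Fin n → Option α, -(p y * Real.log (w j (y j)))
            = -(p y * Real.log (prEq μ (X j) ((y j).getD d))) := by
          intro y
          by_cases hy : p y = 0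
          · simp [hy]
          · rw [hysome y (hyS y hy) j hj]
            simp [hwdef, hj]
        rw [Finset.sum_congr rfl (fun y _ => hterm y)]
        rw [← Finset.sum_fiberwise_of_maps_to
          (g := fun y : Fin n → Option α => (y j).getD d)
          (fun y (_ : y ∈ (univ : Finset (Fin n → Option α))) => Finset.mem_univ _)
          (fun y => -(p y * Real.log (prEq μ (X j) ((y j).getD d))))]
        unfold entro
        refine Finset.sum_congr rfl fun a _ => ?_
        have hfe : ∀ y ∈ univ.filter (fun y : Fin n → Option α => (y j).getD d = a),
            -(p y * Real.log (prEq μ (X j) ((y j).getD d)))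
              = (-Real.log (prEq μ (X j) a)) * p y := by
          intro y hy
          rw [(Finset.mem_filter.mp hy).2]; ring
        have hfib : ∑ y ∈ univ.filter (fun y : Fin n → Option α => (y j).getD d = a), p y
            = prEq μ (X j) a := by
          rw [hmarg j hj a, Finset.sum_filter]
        rw [Finset.sum_congr rfl hfe, ← Finset.mul_sum, hfib]
        simp [Real.negMulLog]
        ring
      · rw [if_neg hj]
        refine Finset.sum_eq_zero fun y _ => ?_
        by_cases hy : p y = 0
        · simp [hy]
        · rw [hynone y (hyS y hy) j hj]
          simp [hwdef, hj]
    calc entro μ (Z S) = ∑ y, negMulLog (p y) := rfl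
      _ ≤ ∑ y, -(p y * Real.log (∏ j, w j (y j))) := hgibbs
      _ = ∑ j, ∑ y, -(p y * Real.log (w j (y j))) := by
          rw [Finset.sum_congr rfl (fun y _ => hlog y)]
          exact Finset.sum_comm
      _ = ∑ j, (if j ∈ S then entro μ (X j) else 0) :=
          Finset.sum_congr rfl fun j _ => hinner j
      _ = ∑ j ∈ S, entro μ (X j) := by
          rw [Finset.sum_ite_mem, Finset.univ_inter]
  -- Step (8): probability of membership as a sum over values of J
  have h8 : ∀ j : Fin n, prEvent μ (fun ω => j ∈ J ω)
      = ∑ S, if j ∈ S then prEq μ J S else 0 := by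
    intro j
    unfold prEvent prEq
    have e1 : ∀ S : Finset (Fin n), (if j ∈ S then (∑ ω, if J ω = S then μ ω else 0) else 0)
        = ∑ ω, if j ∈ S then (if J ω = S then μ ω else 0) else 0 := by
      intro S; split <;> simp
    simp_rw [e1]
    rw [Finset.sum_comm]
    refine Finset.sum_congr rfl fun ω _ => ?_
    have e2 : ∀ S : Finset (Fin n), (if j ∈ S then (if J ω = S then μ ω else 0) else 0)
        = if J ω = S then (if j ∈ S then μ ω else 0) else 0 := by
      intro S; by_cases h1 : j ∈ S <;> by_cases hh : J ω = S <;> simp [h1, hh]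
    simp_rw [e2]
    rw [Finset.sum_ite_eq univ (J ω) (fun S => if j ∈ S then μ ω else 0)]
    simp
  -- conclusion
  have hcond : condEntro μ Y J = ∑ S, prEq μ J S * entro μ (Z S) := by
    unfold condEntro
    rw [h1, h5]
    ring
  rw [hcond]
  have hM : ∀ j : Fin n, prEvent μ (fun ω => j ∈ J ω)
      ≤ Finset.univ.sup' ⟨⟨0, hn⟩, Finset.mem_univ _⟩
          (fun u => prEvent μ (fun ω => u ∈ J ω)) :=
    fun j => Finset.le_sup' (f := fun u => prEvent μ (fun ω => u ∈ J ω)) (Finset.mem_univ j)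
  calc ∑ S, prEq μ J S * entro μ (Z S)
      ≤ ∑ S, prEq μ J S * ∑ j ∈ S, entro μ (X j) :=
        Finset.sum_le_sum fun S _ => mul_le_mul_of_nonneg_left (h7 S) (prEq_nonneg' hμ0 J S)
    _ = ∑ j, prEvent μ (fun ω => j ∈ J ω) * entro μ (X j) := by
        have e1 : ∀ S : Finset (Fin n), prEq μ J S * ∑ j ∈ S, entro μ (X j)
            = ∑ j, (if j ∈ S then prEq μ J S else 0) * entro μ (X j) := by
          intro S
          rw [← Finset.univ_inter S, ← Finset.sum_ite_mem, Finset.mul_sum]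
          refine Finset.sum_congr rfl fun j _ => ?_
          by_cases h : j ∈ S <;> simp [h]
        rw [Finset.sum_congr rfl (fun S _ => e1 S), Finset.sum_comm]
        refine Finset.sum_congr rfl fun j _ => ?_
        rw [h8 j, Finset.sum_mul]
    _ ≤ ∑ j, (Finset.univ.sup' ⟨⟨0, hn⟩, Finset.mem_univ _⟩
          (fun u => prEvent μ (fun ω => u ∈ J ω))) * entro μ (X j) :=
        Finset.sum_le_sum fun j _ =>
          mul_le_mul_of_nonneg_right (hM j) (entro_nonneg' hμ0 hμ1 (X j))
    _ = _ := by rw [Finset.mul_sum]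
end

section
/- The LCM uplink load formula: with g = ⌊H/v⌋ groups of v servers, k = g − ⌊2s/v⌋ − T_h ≥ 1 gradient shards per client, and each client sending one length-(p/k) coded vector to each of the g groups (v servers per group), the uplink communication load equals C_up^LCM = g·v/k = ⌊H/v⌋·v / (⌊H/v⌋ − ⌊2s/v⌋ − T_h). Moreover for all valid integers H, s, v, T_h with 2s < H and k ≥ 1, this is at least the converse bound H/(H − 2s − T_h), with equality when v = 1. -/
open Finset

set_option maxHeartbeats 1000000

theorem stmt15_key (H v s Th : ℕ) (hv : 0 < v) (hs : 2 * s < H)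
    (hk : 1 ≤ H / v - 2 * s / v - Th) (hH : 1 ≤ H - 2 * s - Th) :
    H * (H / v - 2 * s / v - Th) ≤ (H / v * v) * (H - 2 * s - Th) := by
  set g := H / v with hg
  set a := 2 * s / v with ha
  have h1 : g * v ≤ H := Nat.div_mul_le_self H v
  have h2 : H < g * v + v := by
    have h := Nat.div_add_mod H v
    have h' := Nat.mod_lt H hv
    rw [hg, mul_comm]
    omega
  have h3 : a * v ≤ 2 * s := Nat.div_mul_le_self (2 * s) v
  have h4 : 2 * s < a * v + v := by
    have h := Nat.div_add_mod (2 * s) v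
    have h' := Nat.mod_lt (2 * s) hv
    rw [ha, mul_comm (2 * s / v) v]
    omega
  have hk' : a + Th + 1 ≤ g := by omega
  have hH' : 2 * s + Th + 1 ≤ H := by omega
  have e1 : g - a - Th = g - (a + Th) := by omega
  have e2 : H - 2 * s - Th = H - (2 * s + Th) := by omega
  rw [e1, e2]
  zify [show a + Th ≤ g by omega, show 2 * s + Th ≤ H by omega]
  -- work over ℤ
  have h1' : (g : ℤ) * v ≤ H := by exact_mod_cast h1
  have h2' : (H : ℤ) < g * v + v := by exact_mod_cast h2
  have h3' : (a : ℤ) * v ≤ 2 * s := by exact_mod_cast h3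
  have h4' : (2 * s : ℤ) < a * v + v := by exact_mod_cast h4
  have hk'' : (a : ℤ) + Th + 1 ≤ g := by exact_mod_cast hk'
  have hgv : (1 : ℤ) ≤ g * v := by
    have : (1:ℤ) ≤ g := by nlinarith
    nlinarith
  have hvz : (1 : ℤ) ≤ v := by exact_mod_cast hv
  nlinarith [mul_nonneg (sub_nonneg.2 h1') (sub_nonneg.2 (by nlinarith : (g : ℤ) - a - Th ≤ g * v)),
    mul_nonneg (sub_nonneg.2 hgv) (by nlinarith : (0:ℤ) ≤ (g - a) * (v - 1) - (2 * s - a * v))]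

/-- the LCM uplink load. With `g = ⌊H/v⌋` groups of `v` servers and
`k = ⌊H/v⌋ - ⌊2s/v⌋ - T_h ≥ 1` shards of length `p/k` per client, each client sends one
length-`(p/k)` coded vector to each of the `g·v` retained servers, so the uplink load is
`C_up^LCM = g·v·(p/k)/p = ⌊H/v⌋·v / (⌊H/v⌋ - ⌊2s/v⌋ - T_h)`; moreover this is at least
the converse bound `H / (H - 2s - T_h)`, with equality when `v = 1`. -/
theorem stmt15 (H v s Th p : ℕ) (hv : 0 < v) (hs : 2 * s < H) (hp : 0 < p)
    (hk : 1 ≤ H / v - 2 * s / v - Th) (hH : 1 ≤ H - 2 * s - Th)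
    (hdvd : (H / v - 2 * s / v - Th) ∣ p) :
    (((H / v * v * (p / (H / v - 2 * s / v - Th)) : ℕ) : ℝ) / (p : ℝ)
        = ((H / v * v : ℕ) : ℝ) / ((H / v - 2 * s / v - Th : ℕ) : ℝ))
    ∧ (H : ℝ) / ((H - 2 * s - Th : ℕ) : ℝ)
        ≤ ((H / v * v : ℕ) : ℝ) / ((H / v - 2 * s / v - Th : ℕ) : ℝ)
    ∧ (v = 1 →
        ((H / v * v : ℕ) : ℝ) / ((H / v - 2 * s / v - Th : ℕ) : ℝ)
          = (H : ℝ) / ((H - 2 * s - Th : ℕ) : ℝ)) := by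
  set k := H / v - 2 * s / v - Th with hkdef
  have hk0 : (0 : ℝ) < (k : ℕ) := by exact_mod_cast hk
  have hH0 : (0 : ℝ) < ((H - 2 * s - Th : ℕ) : ℝ) := by exact_mod_cast hH
  have hp0 : (0 : ℝ) < (p : ℝ) := by exact_mod_cast hp
  refine ⟨?_, ?_, ?_⟩
  · obtain ⟨q, hq⟩ := hdvd
    have hq0 : 0 < q := by
      rcases Nat.eq_zero_or_pos q with h | h
      · subst h; simp at hq; omega
      · exact h
    have hquot : p / k = q := by rw [hq]; exact Nat.mul_div_cancel_left q (by omega)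
    rw [hquot, hq]
    push_cast
    have hqr : (0 : ℝ) < (q : ℝ) := by exact_mod_cast hq0
    field_simp
  · rw [div_le_div_iff₀ hH0 hk0]
    have key := stmt15_key H v s Th hv hs hk hH
    calc (H : ℝ) * (k : ℕ) = ((H * k : ℕ) : ℝ) := by push_cast; ring
      _ ≤ (((H / v * v) * (H - 2 * s - Th) : ℕ) : ℝ) := by exact_mod_cast key
      _ = ((H / v * v : ℕ) : ℝ) * ((H - 2 * s - Th : ℕ) : ℝ) := by push_cast; ring
  · intro hv1
    subst hv1
    simp only [Nat.div_one, mul_one] at *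
    rw [hkdef]
end
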